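/- Let Γ₁∞ ≤ Γ₁ be the subgroup generated by T and −I. Call a double coset c ∈ Γ\Γ₁/Γ₁∞ a cusp of Γ, and call a cusp [A] regular if the double cosets of A and of −A in Γ\Γ₁/⟨T⟩ are distinct, where ⟨T⟩ = {Tⁿ : n ∈ ℤ}. Then the complex dimension of C_w^Γ equals: the number of cusps of Γ, if k > 2 is even; the number of cusps of Γ minus 1, if k = 2; and the number of regular cusps of Γ, if k > 2 is odd. -/

import Mathlib

noncomputable section

open Matrix Polynomial Finset Filter MeasureTheory

abbrev SL2Z := Matrix.SpecialLinearGroup (Fin 2) ℤ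

def mc (g : SL2Z) (i j : Fin 2) : ℂ := ((g : Matrix (Fin 2) (Fin 2) ℤ) i j : ℂ)

def Sm : SL2Z := ⟨!![0, -1; 1, 0], by norm_num [Matrix.det_fin_two_of]⟩
def Tm : SL2Z := ⟨!![1, 1; 0, 1], by norm_num [Matrix.det_fin_two_of]⟩
def Um : SL2Z := Tm * Sm

def negSL (A : SL2Z) : SL2Z := ⟨-A.1, by simp [Matrix.det_neg, A.2]⟩

/-- weight `-w` right action of `g` on polynomials of degree at most `w`:
`(P|g)(X) = (cX+d)^w P((aX+b)/(cX+d))`. -/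
def pSlash (w : ℕ) (P : Polynomial ℂ) (g : SL2Z) : Polynomial ℂ :=
  ∑ n ∈ Finset.range (w + 1),
    C (P.coeff n) * (C (mc g 0 0) * X + C (mc g 0 1)) ^ n *
      (C (mc g 1 0) * X + C (mc g 1 1)) ^ (w - n)

/-- right action of `g` on families `P : Γ₁ → V_w`: `(P|g)(A) = P(Ag⁻¹)|g`. -/
def famSlash (w : ℕ) (P : SL2Z → Polynomial ℂ) (g : SL2Z) : SL2Z → Polynomial ℂ :=
  fun A => pSlash w (P (A * g⁻¹)) g

/-- membership in the induced module `V_w^Γ`. -/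
structure MemV (Γ : Subgroup SL2Z) (w : ℕ) (P : SL2Z → Polynomial ℂ) : Prop where
  deg : ∀ A, (P A).degree ≤ (w : ℕ)
  inv : ∀ γ ∈ Γ, ∀ A, P (γ * A) = P A
  parity : ∀ A, P (negSL A) = (-1 : ℂ) ^ w • P A

/-- the space of period polynomials `W_w^Γ`. -/
def MemW (Γ : Subgroup SL2Z) (w : ℕ) (P : SL2Z → Polynomial ℂ) : Prop :=
  MemV Γ w P ∧ (∀ A, P A + famSlash w P Sm A = 0) ∧
    (∀ A, P A + famSlash w P Um A + famSlash w P (Um * Um) A = 0)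

/-- the space of coboundary polynomials `C_w^Γ = {P|(1-S) : P ∈ V_w^Γ, P|T = P}`. -/
def MemC (Γ : Subgroup SL2Z) (w : ℕ) (Q : SL2Z → Polynomial ℂ) : Prop :=
  ∃ P, MemV Γ w P ∧ (∀ A, famSlash w P Tm A = P A) ∧ ∀ A, Q A = P A - famSlash w P Sm A

def uhp : Set ℂ := {z | 0 < z.im}

/-- the weight `k` slash action on functions. -/
def slashk (k : ℤ) (g : SL2Z) (f : ℂ → ℂ) : ℂ → ℂ := fun z =>
  (mc g 1 0 * z + mc g 1 1) ^ (-k) *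
    f ((mc g 0 0 * z + mc g 0 1) / (mc g 1 0 * z + mc g 1 1))

/-- cusp forms of weight `k` for `Γ`. -/
structure IsCuspForm (Γ : Subgroup SL2Z) (k : ℤ) (f : ℂ → ℂ) : Prop where
  holo : DifferentiableOn ℂ f uhp
  trans : ∀ γ ∈ Γ, ∀ z ∈ uhp, slashk k γ f z = f z
  decay : ∀ A : SL2Z, Tendsto (slashk k A f) (Filter.comap Complex.im atTop) (nhds 0)

/-- the period polynomial `ρ_f(A) = ∫₀^{i∞} (f|A)(t)(t-X)^w dt`, via its coefficients. -/
def rho (k : ℤ) (w : ℕ) (f : ℂ → ℂ) (A : SL2Z) : Polynomial ℂ :=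
  ∑ m ∈ Finset.range (w + 1),
    C ((-1 : ℂ) ^ m * (w.choose m : ℂ) * Complex.I ^ (w - m + 1) *
        ∫ y in Set.Ioi (0 : ℝ), slashk k A f (Complex.I * y) * (y : ℂ) ^ (w - m)) * X ^ m

/-- the pairing `⟨·,·⟩` on `V_w`. -/
def pairV (w : ℕ) (P Q : Polynomial ℂ) : ℂ :=
  ∑ n ∈ Finset.range (w + 1),
    (-1 : ℂ) ^ (w - n) * ((w.choose n : ℂ))⁻¹ * P.coeff n * Q.coeff (w - n)

/-- the pairing `⟪·,·⟫` on `V_w^Γ`, w.r.t. a set `Rt` of coset representatives for `Γ\Γ₁`. -/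
def pairG (Γ : Subgroup SL2Z) (w : ℕ) (Rt : Finset SL2Z) (P Q : SL2Z → Polynomial ℂ) : ℂ :=
  ((Γ.index : ℂ))⁻¹ * ∑ A ∈ Rt, pairV w (P A) (Q A)

/-- the pairing `{P,Q} = ⟪P|(T-T⁻¹),Q⟫`. -/
def brk (Γ : Subgroup SL2Z) (w : ℕ) (Rt : Finset SL2Z) (P Q : SL2Z → Polynomial ℂ) : ℂ :=
  pairG Γ w Rt (fun A => famSlash w P Tm A - famSlash w P Tm⁻¹ A) Q

/-- `Rt` is a set of representatives for the right cosets `Γ\Γ₁`. -/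
def IsTransversal (Γ : Subgroup SL2Z) (Rt : Finset SL2Z) : Prop :=
  Subgroup.IsComplement (Γ : Set SL2Z) (Rt : Set SL2Z)

/-- the standard fundamental domain for `SL₂(ℤ)` in the upper half plane. -/
def fundDom : Set ℂ := {z | 0 < z.im ∧ 1 ≤ ‖z‖ ∧ |z.re| ≤ 1 / 2}

/-- the Petersson product w.r.t. a set `Rt` of coset representatives for `Γ\Γ₁`. -/
def petersson (Γ : Subgroup SL2Z) (k : ℤ) (Rt : Finset SL2Z) (f g : ℂ → ℂ) : ℂ :=
  ((Γ.index : ℂ))⁻¹ * ∑ A ∈ Rt, ∫ z in fundDom,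
    slashk k A f z * (starRingEnd ℂ) (slashk k A g z) * (z.im : ℂ) ^ (k - 2)

def Ck (k : ℤ) : ℂ := -(2 * Complex.I) ^ (k - 1)

/-- conjugation of `A` by `ε = [[-1,0],[0,1]]`. -/
def epsConj (A : SL2Z) : SL2Z :=
  ⟨!![A.1 0 0, -A.1 0 1; -A.1 1 0, A.1 1 1], by
    have h := A.2
    rw [Matrix.det_fin_two] at h
    rw [Matrix.det_fin_two_of]
    linear_combination h⟩

/-- the involution `(P|ε)(A)(X) = P(εAε)(-X)` of `V_w^Γ`. -/
def epsAct (w : ℕ) (P : SL2Z → Polynomial ℂ) : SL2Z → Polynomial ℂ :=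
  fun A => (P (epsConj A)).comp (-X)

/-- `P^± = (P ± P|ε)/2`, where `s = ±1`. -/
def pm (w : ℕ) (s : ℂ) (P : SL2Z → Polynomial ℂ) : SL2Z → Polynomial ℂ :=
  fun A => (2 : ℂ)⁻¹ • (P A + s • epsAct w P A)

/-- coefficientwise complex conjugation. -/
def conjFam (P : SL2Z → Polynomial ℂ) : SL2Z → Polynomial ℂ :=
  fun A => (P A).map (starRingEnd ℂ)

/-- the periods `r_{A,n}(f)`, extracted from any `P ∈ V_w^Γ` by
`P(A)(X) = Σₙ (-1)^{w-n} binom(w,n) r_{A,n} X^{w-n}`. -/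
def per (w : ℕ) (P : SL2Z → Polynomial ℂ) (A : SL2Z) (n : ℕ) : ℂ :=
  (-1 : ℂ) ^ (w - n) * ((w.choose n : ℂ))⁻¹ * (P A).coeff (w - n)

/-- `Γ₁∞`, the subgroup generated by `T` and `-I`. -/
def GammaInf : Subgroup SL2Z := Subgroup.closure {Tm, negSL 1}

/-- the set of cusps of `Γ`: the double cosets `Γ\Γ₁/Γ₁∞`. -/
def Cusps (Γ : Subgroup SL2Z) := DoubleCoset.Quotient (Γ : Set SL2Z) (GammaInf : Set SL2Z)

/-- a cusp `[A]` is regular if the double cosets of `A` and `-A` in `Γ\Γ₁/⟨T⟩` are distinct. -/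
def IsRegularCusp (Γ : Subgroup SL2Z) (c : Cusps Γ) : Prop :=
  ∀ A : SL2Z, DoubleCoset.mk Γ GammaInf A = c →
    DoubleCoset.mk Γ (Subgroup.zpowers Tm) A ≠ DoubleCoset.mk Γ (Subgroup.zpowers Tm) (negSL A)

/-!
An element `P` of `(V_w^Γ)^T` satisfies `P(AT) = P(A)(X+1)`. Some `A Tʰ A⁻¹` with `h > 0` lies in
`Γ`, so each `P(A)` is a periodic polynomial, hence a constant. Thus `(V_w^Γ)^T` is the space of
scalar functions on `Γ\Γ₁/⟨T⟩` with `φ(-A) = (-1)^w φ(A)`. For even `w` these are the functions on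
the cusps; for odd `w` they vanish on irregular cusps and are determined by one value at each
regular cusp, the two `⟨T⟩`-classes above a regular cusp carrying opposite values.
On constants, `P|(1-S)(A) = P(A) - P(AS⁻¹) X^w`, so `P ↦ P|(1-S)` is injective for `w > 0`; for
`w = 0` its kernel consists of the functions invariant under right multiplication by `S` and `T`,
which generate `Γ₁`, i.e. of the constants.
-/

theorem Polynomial.eq_C_eval_zero_of_periodic {R : Type*} [CommRing R] [IsDomain R] [CharZero R]
    {p : R[X]} {c : R} (hc : c ≠ 0) (hp : Function.Periodic p.eval c) : p = C (p.eval 0) := by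
  have hroots : p - C (p.eval 0) = 0 := by
    refine eq_zero_of_infinite_isRoot _ (Set.infinite_of_injective_forall_mem
      (f := fun n : ℕ => (n : R) * c) (fun m n h => ?_) fun n => ?_)
    · exact_mod_cast mul_right_cancel₀ hc h
    · simp [hp.nat_mul_eq n]
  exact sub_eq_zero.mp hroots

section GroupTheory

variable {G α : Type*} [Group G]

theorem Subgroup.apply_mul_eq_of_mem_closure {s : Set G} {f : G → α}
    (hf : ∀ g ∈ s, ∀ A, f (A * g) = f A) {g : G} (hg : g ∈ Subgroup.closure s) (A : G) :
    f (A * g) = f A := by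
  induction hg using Subgroup.closure_induction generalizing A with
  | mem g hg => exact hf g hg A
  | one => rw [mul_one]
  | mul g h _ _ ihg ihh => rw [← mul_assoc, ihh, ihg]
  | inv g _ ihg => rw [← ihg (A * g⁻¹), inv_mul_cancel_right]

theorem Subgroup.exists_pos_conj_pow_mem {Γ : Subgroup G} [Γ.FiniteIndex] (A g : G) :
    ∃ h : ℕ, 0 < h ∧ A * g ^ h * A⁻¹ ∈ Γ := by
  have hindex : (Γ.comap (MulAut.conj A).toMonoidHom).index ≠ 0 := by
    rw [Subgroup.index_comap_of_surjective _ (MulAut.conj A).surjective]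
    exact Subgroup.FiniteIndex.index_ne_zero
  obtain ⟨h, hpos, -, hmem⟩ := Subgroup.exists_pow_mem_of_index_ne_zero hindex g
  refine ⟨h, hpos, ?_⟩
  simpa using hmem

end GroupTheory

namespace CoboundaryPolynomials

theorem negSL_eq_neg (A : SL2Z) : negSL A = -A := rfl

theorem closure_Sm_Tm : Subgroup.closure {Sm, Tm} = ⊤ :=
  SpecialLinearGroup.SL2Z_generators

theorem mem_GammaInf_iff {g : SL2Z} : g ∈ GammaInf ↔ ∃ n : ℤ, g = Tm ^ n ∨ g = -Tm ^ n := by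
  refine ⟨fun hg => ?_, ?_⟩
  · induction hg using Subgroup.closure_induction with
    | mem g hg =>
      rcases hg with rfl | rfl
      · exact ⟨1, by simp⟩
      · exact ⟨0, by simp [negSL_eq_neg]⟩
    | one => exact ⟨0, by simp⟩
    | mul g h _ _ ihg ihh =>
      obtain ⟨m, rfl | rfl⟩ := ihg <;> obtain ⟨n, rfl | rfl⟩ := ihh <;>
        exact ⟨m + n, by simp [_root_.zpow_add]⟩
    | inv g _ ihg =>
      obtain ⟨n, rfl | rfl⟩ := ihg
      · exact ⟨-n, Or.inl (_root_.zpow_neg Tm n).symm⟩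
      · exact ⟨-n, Or.inr (inv_eq_of_mul_eq_one_right (by simp))⟩
  · have hT : Tm ∈ GammaInf := Subgroup.subset_closure (by simp)
    have hneg : -1 ∈ GammaInf := Subgroup.subset_closure (by simp [negSL_eq_neg])
    rintro ⟨n, rfl | rfl⟩
    · exact zpow_mem hT n
    · simpa using mul_mem hneg (zpow_mem hT n)

section Cusps

variable {Γ : Subgroup SL2Z}

variable (Γ) in
abbrev tClass (A : SL2Z) : DoubleCoset.Quotient (Γ : Set SL2Z) (Subgroup.zpowers Tm) :=
  DoubleCoset.mk Γ (Subgroup.zpowers Tm) A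

variable (Γ) in
abbrev cuspOf (A : SL2Z) : Cusps Γ := DoubleCoset.mk Γ GammaInf A

variable (Γ) in
def cuspRep (c : Cusps Γ) : SL2Z := Quotient.out c

theorem cuspOf_cuspRep (c : Cusps Γ) : cuspOf Γ (cuspRep Γ c) = c := Quotient.out_eq c

theorem tClass_mul_left {γ : SL2Z} (hγ : γ ∈ Γ) (A : SL2Z) : tClass Γ (γ * A) = tClass Γ A :=
  ((DoubleCoset.eq _ _ _ _).mpr ⟨γ, hγ, 1, one_mem _, by rw [mul_one]⟩).symm

theorem tClass_mul_Tm (A : SL2Z) : tClass Γ (A * Tm) = tClass Γ A :=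
  ((DoubleCoset.eq _ _ _ _).mpr ⟨1, one_mem _, Tm, Subgroup.mem_zpowers Tm, by rw [one_mul]⟩).symm

theorem cuspOf_eq_iff {A B : SL2Z} :
    cuspOf Γ A = cuspOf Γ B ↔ tClass Γ A = tClass Γ B ∨ tClass Γ (-A) = tClass Γ B := by
  refine (DoubleCoset.eq _ _ _ _).trans ?_
  simp only [tClass, DoubleCoset.eq]
  constructor
  · rintro ⟨γ, hγ, g, hg, rfl⟩
    obtain ⟨n, rfl | rfl⟩ := mem_GammaInf_iff.mp hg
    · exact Or.inl ⟨γ, hγ, Tm ^ n, Subgroup.zpow_mem_zpowers Tm n, rfl⟩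
    · exact Or.inr ⟨γ, hγ, Tm ^ n, Subgroup.zpow_mem_zpowers Tm n, by simp⟩
  · rintro (⟨γ, hγ, t, ⟨n, rfl⟩, rfl⟩ | ⟨γ, hγ, t, ⟨n, rfl⟩, rfl⟩)
    · exact ⟨γ, hγ, Tm ^ n, mem_GammaInf_iff.mpr ⟨n, Or.inl rfl⟩, rfl⟩
    · exact ⟨γ, hγ, -Tm ^ n, mem_GammaInf_iff.mpr ⟨n, Or.inr rfl⟩, by simp⟩

theorem cuspOf_mul_left {γ : SL2Z} (hγ : γ ∈ Γ) (A : SL2Z) : cuspOf Γ (γ * A) = cuspOf Γ A :=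
  cuspOf_eq_iff.mpr (Or.inl (tClass_mul_left hγ A))

theorem cuspOf_mul_Tm (A : SL2Z) : cuspOf Γ (A * Tm) = cuspOf Γ A :=
  cuspOf_eq_iff.mpr (Or.inl (tClass_mul_Tm A))

theorem cuspOf_neg (A : SL2Z) : cuspOf Γ (-A) = cuspOf Γ A :=
  cuspOf_eq_iff.mpr (Or.inr (by rw [neg_neg]))

theorem tClass_neg_eq_iff_ne {A B : SL2Z} (hreg : IsRegularCusp Γ (cuspOf Γ B))
    (h : cuspOf Γ A = cuspOf Γ B) : tClass Γ (-A) = tClass Γ B ↔ tClass Γ A ≠ tClass Γ B := by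
  refine ⟨fun hneg hpos => hreg A h (hpos.trans hneg.symm), fun hne => ?_⟩
  exact (cuspOf_eq_iff.mp h).resolve_left hne

instance [Γ.FiniteIndex] : Finite (Cusps Γ) := by
  refine Finite.of_surjective (fun q : SL2Z ⧸ Γ =>
    q.liftOn' (fun A => cuspOf Γ A⁻¹) fun A B hAB => ?_) ?_
  · exact (DoubleCoset.eq _ _ _ _).mpr
      ⟨(A⁻¹ * B)⁻¹, inv_mem (QuotientGroup.leftRel_apply.mp hAB), 1, one_mem _, by group⟩
  · intro c
    refine ⟨((cuspRep Γ c)⁻¹ : SL2Z), ?_⟩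
    show cuspOf Γ (cuspRep Γ c)⁻¹⁻¹ = c
    rw [inv_inv, cuspOf_cuspRep]

end Cusps

section CuspFunctions

variable {Γ : Subgroup SL2Z}

structure IsCuspFunction (Γ : Subgroup SL2Z) (s : ℂ) (φ : SL2Z → ℂ) : Prop where
  mul_left : ∀ γ ∈ Γ, ∀ A, φ (γ * A) = φ A
  mul_Tm : ∀ A, φ (A * Tm) = φ A
  neg : ∀ A, φ (-A) = s * φ A

variable (Γ) in
def cuspFunctions (s : ℂ) : Submodule ℂ (SL2Z → ℂ) where
  carrier := {φ | IsCuspFunction Γ s φ}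
  zero_mem' := ⟨fun _ _ _ => rfl, fun _ => rfl, fun _ => by simp⟩
  add_mem' {φ ψ} hφ hψ :=
    ⟨fun γ hγ A => by simp [hφ.mul_left γ hγ, hψ.mul_left γ hγ],
      fun A => by simp [hφ.mul_Tm, hψ.mul_Tm], fun A => by simp [hφ.neg, hψ.neg, mul_add]⟩
  smul_mem' c {φ} hφ :=
    ⟨fun γ hγ A => by simp [hφ.mul_left γ hγ], fun A => by simp [hφ.mul_Tm],
      fun A => by simp [hφ.neg, mul_left_comm]⟩

namespace IsCuspFunction

variable {s : ℂ} {φ : SL2Z → ℂ}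

theorem apply_eq_of_tClass_eq (hφ : IsCuspFunction Γ s φ) {A B : SL2Z}
    (h : tClass Γ A = tClass Γ B) : φ B = φ A := by
  obtain ⟨γ, hγ, t, ht, rfl⟩ := (DoubleCoset.eq _ _ _ _).mp h
  rw [Subgroup.zpowers_eq_closure] at ht
  have hT (g : SL2Z) (hg : g ∈ ({Tm} : Set SL2Z)) (A : SL2Z) : φ (A * g) = φ A := by
    rw [Set.mem_singleton_iff.mp hg, hφ.mul_Tm]
  rw [Subgroup.apply_mul_eq_of_mem_closure hT ht, hφ.mul_left γ hγ]

theorem apply_eq_or_of_cuspOf_eq (hφ : IsCuspFunction Γ s φ) {A B : SL2Z}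
    (h : cuspOf Γ A = cuspOf Γ B) : φ B = φ A ∨ φ B = s * φ A := by
  rcases cuspOf_eq_iff.mp h with h | h
  · exact Or.inl (hφ.apply_eq_of_tClass_eq h)
  · exact Or.inr ((hφ.apply_eq_of_tClass_eq h).trans (hφ.neg A))

theorem apply_cuspRep (hφ : IsCuspFunction Γ 1 φ) (A : SL2Z) :
    φ (cuspRep Γ (cuspOf Γ A)) = φ A := by
  rcases hφ.apply_eq_or_of_cuspOf_eq (cuspOf_cuspRep (cuspOf Γ A)).symm with h | h <;>
    simpa using h

theorem eq_zero_of_not_isRegularCusp (hφ : IsCuspFunction Γ (-1) φ) {A : SL2Z}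
    (h : ¬ IsRegularCusp Γ (cuspOf Γ A)) : φ A = 0 := by
  simp only [IsRegularCusp, negSL_eq_neg, not_forall, not_not] at h
  obtain ⟨B, hBA, hB⟩ := h
  have hB0 : φ B = 0 := by
    have := (hφ.apply_eq_of_tClass_eq hB).symm.trans (hφ.neg B)
    linear_combination this / 2
  rcases hφ.apply_eq_or_of_cuspOf_eq hBA with h | h <;> simp [h, hB0]

end IsCuspFunction

variable (Γ) in
def cuspFunctionsOneEquiv : cuspFunctions Γ 1 ≃ₗ[ℂ] (Cusps Γ → ℂ) where
  toFun φ c := φ.1 (cuspRep Γ c)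
  map_add' _ _ := rfl
  map_smul' _ _ := rfl
  invFun f := ⟨fun A => f (cuspOf Γ A),
    ⟨fun γ hγ A => by rw [cuspOf_mul_left hγ], fun A => by rw [cuspOf_mul_Tm],
      fun A => by rw [cuspOf_neg, one_mul]⟩⟩
  left_inv φ := Subtype.ext <| funext fun A => φ.2.apply_cuspRep A
  right_inv f := funext fun c => congrArg f (cuspOf_cuspRep c)

open Classical in
variable (Γ) in
def signedExtension (f : {c : Cusps Γ // IsRegularCusp Γ c} → ℂ) (A : SL2Z) : ℂ :=
  (if tClass Γ A = tClass Γ (cuspRep Γ (cuspOf Γ A)) then 1 else -1) *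
    Function.extend Subtype.val f 0 (cuspOf Γ A)

open Classical in
theorem isCuspFunction_signedExtension (f : {c : Cusps Γ // IsRegularCusp Γ c} → ℂ) :
    IsCuspFunction Γ (-1) (signedExtension Γ f) where
  mul_left γ hγ A := by simp only [signedExtension, cuspOf_mul_left hγ, tClass_mul_left hγ]
  mul_Tm A := by simp only [signedExtension, cuspOf_mul_Tm, tClass_mul_Tm]
  neg A := by
    by_cases hreg : IsRegularCusp Γ (cuspOf Γ A)
    · have hA := (cuspOf_cuspRep (cuspOf Γ A)).symm
      by_cases h : tClass Γ A = tClass Γ (cuspRep Γ (cuspOf Γ A)) <;>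
        simp [signedExtension, cuspOf_neg, tClass_neg_eq_iff_ne (hA ▸ hreg) hA, h]
    · have hzero : Function.extend Subtype.val f 0 (cuspOf Γ A) = 0 :=
        Function.extend_apply' _ _ _ fun ⟨c, hc⟩ => hreg (hc ▸ c.2)
      simp [signedExtension, cuspOf_neg, hzero]

theorem signedExtension_apply_cuspRep (f : {c : Cusps Γ // IsRegularCusp Γ c} → ℂ)
    (c : {c : Cusps Γ // IsRegularCusp Γ c}) : signedExtension Γ f (cuspRep Γ c.1) = f c := by
  simp [signedExtension, cuspOf_cuspRep]

theorem IsCuspFunction.signedExtension_cuspRep {φ : SL2Z → ℂ} (hφ : IsCuspFunction Γ (-1) φ)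
    (A : SL2Z) : signedExtension Γ (fun c => φ (cuspRep Γ c.1)) A = φ A := by
  by_cases hreg : IsRegularCusp Γ (cuspOf Γ A)
  · have hA := (cuspOf_cuspRep (cuspOf Γ A)).symm
    have hext := Subtype.val_injective.extend_apply (fun c => φ (cuspRep Γ c.1)) 0
      ⟨cuspOf Γ A, hreg⟩
    by_cases h : tClass Γ A = tClass Γ (cuspRep Γ (cuspOf Γ A))
    · simp [signedExtension, hext, h, hφ.apply_eq_of_tClass_eq h]
    · have hneg := (tClass_neg_eq_iff_ne (hA ▸ hreg) hA).mpr h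
      simp [signedExtension, hext, h, hφ.apply_eq_of_tClass_eq hneg, hφ.neg]
  · have hzero : Function.extend Subtype.val (fun c => φ (cuspRep Γ c.1)) 0 (cuspOf Γ A) = 0 :=
      Function.extend_apply' _ _ _ fun ⟨c, hc⟩ => hreg (hc ▸ c.2)
    simp [signedExtension, hzero, hφ.eq_zero_of_not_isRegularCusp hreg]

variable (Γ) in
def cuspFunctionsNegOneEquiv :
    cuspFunctions Γ (-1) ≃ₗ[ℂ] ({c : Cusps Γ // IsRegularCusp Γ c} → ℂ) where
  toFun φ c := φ.1 (cuspRep Γ c.1)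
  map_add' _ _ := rfl
  map_smul' _ _ := rfl
  invFun f := ⟨signedExtension Γ f, isCuspFunction_signedExtension f⟩
  left_inv φ := Subtype.ext <| funext φ.2.signedExtension_cuspRep
  right_inv f := funext (signedExtension_apply_cuspRep f)

end CuspFunctions

section Polynomials

variable {Γ : Subgroup SL2Z} {w : ℕ}

variable (w) in
def pSlashLinear (g : SL2Z) : ℂ[X] →ₗ[ℂ] ℂ[X] where
  toFun p := pSlash w p g
  map_add' p q := by
    simp only [pSlash, ← Finset.sum_add_distrib, coeff_add, C_add, add_mul]
  map_smul' c p := by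
    simp only [pSlash, smul_eq_C_mul, Finset.mul_sum, coeff_C_mul, C_mul, RingHom.id_apply,
      mul_assoc]

variable (w) in
def famSlashLinear (g : SL2Z) : (SL2Z → ℂ[X]) →ₗ[ℂ] (SL2Z → ℂ[X]) :=
  LinearMap.pi fun A => pSlashLinear w g ∘ₗ LinearMap.proj (A * g⁻¹)

theorem famSlashLinear_apply (g : SL2Z) (P : SL2Z → ℂ[X]) :
    famSlashLinear w g P = famSlash w P g := rfl

theorem pSlash_C (c : ℂ) (g : SL2Z) :
    pSlash w (C c) g = C c * (C (mc g 1 0) * X + C (mc g 1 1)) ^ w := by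
  rw [pSlash, Finset.sum_eq_single 0 (fun n _ hn => by simp [coeff_C, hn]) (by simp)]
  simp

theorem pSlash_C_Tm (c : ℂ) : pSlash w (C c) Tm = C c := by
  rw [pSlash_C]
  simp [mc, Tm]

theorem pSlash_C_Sm (c : ℂ) : pSlash w (C c) Sm = C c * X ^ w := by
  rw [pSlash_C]
  simp [mc, Sm]

theorem pSlash_Tm {p : ℂ[X]} (hp : p.degree ≤ w) : pSlash w p Tm = p.comp (X + 1) := by
  rw [pSlash, comp_eq_sum_left,
    sum_over_range' p (by simp) (w + 1) (Nat.lt_succ_of_le (natDegree_le_of_degree_le hp))]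
  simp [mc, Tm]

variable (Γ w) in
def inducedModule : Submodule ℂ (SL2Z → ℂ[X]) where
  carrier := {P | MemV Γ w P}
  zero_mem' := ⟨fun _ => by simp, fun _ _ _ => rfl, fun _ => by simp⟩
  add_mem' {P Q} hP hQ :=
    ⟨fun A => (degree_add_le _ _).trans (max_le (hP.deg A) (hQ.deg A)),
      fun γ hγ A => by simp [hP.inv γ hγ, hQ.inv γ hγ],
      fun A => by simp [hP.parity, hQ.parity]⟩
  smul_mem' c {P} hP :=
    ⟨fun A => (degree_smul_le _ _).trans (hP.deg A), fun γ hγ A => by simp [hP.inv γ hγ],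
      fun A => by simp [hP.parity, smul_comm c]⟩

-- `(V_w^Γ)^T`
variable (Γ w) in
def tInvariants : Submodule ℂ (SL2Z → ℂ[X]) :=
  inducedModule Γ w ⊓ LinearMap.eqLocus (famSlashLinear w Tm) LinearMap.id

theorem mem_tInvariants {P : SL2Z → ℂ[X]} :
    P ∈ tInvariants Γ w ↔ MemV Γ w P ∧ ∀ A, famSlash w P Tm A = P A := by
  simp [tInvariants, inducedModule, famSlashLinear_apply, funext_iff]

section tInvariants

variable {P : SL2Z → ℂ[X]} (hP : P ∈ tInvariants Γ w)
include hP

theorem apply_mul_Tm (A : SL2Z) : P (A * Tm) = (P A).comp (X + 1) := by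
  have h := (mem_tInvariants.mp hP).2 (A * Tm)
  rw [famSlash, mul_inv_cancel_right] at h
  rw [← h, pSlash_Tm ((mem_tInvariants.mp hP).1.deg A)]

theorem eval_apply_mul_Tm_pow (A : SL2Z) (n : ℕ) (x : ℂ) :
    (P (A * Tm ^ n)).eval x = (P A).eval (x + n) := by
  induction n generalizing x with
  | zero => simp
  | succ n ih =>
    rw [pow_succ, ← mul_assoc, apply_mul_Tm hP, eval_comp]
    simp only [ih, eval_add, eval_X, eval_one, Nat.cast_succ]
    ring_nf

theorem apply_eq_C_eval_zero [Γ.FiniteIndex] (A : SL2Z) : P A = C ((P A).eval 0) := by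
  obtain ⟨h, hpos, hmem⟩ := Subgroup.exists_pos_conj_pow_mem (Γ := Γ) A Tm
  refine eq_C_eval_zero_of_periodic (c := (h : ℂ)) (by exact_mod_cast hpos.ne') fun x => ?_
  show (P A).eval (x + h) = (P A).eval x
  rw [← eval_apply_mul_Tm_pow hP A h x]
  congr 1
  calc P (A * Tm ^ h) = P ((A * Tm ^ h * A⁻¹) * A) := by group
    _ = P A := (mem_tInvariants.mp hP).1.inv _ hmem A

theorem isCuspFunction_eval_zero [Γ.FiniteIndex] :
    IsCuspFunction Γ ((-1) ^ w) fun A => (P A).eval 0 where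
  mul_left γ hγ A := by simp only [(mem_tInvariants.mp hP).1.inv γ hγ]
  mul_Tm A := by
    rw [apply_mul_Tm hP, apply_eq_C_eval_zero hP A]
    simp
  neg A := by simp [← negSL_eq_neg, (mem_tInvariants.mp hP).1.parity]

end tInvariants

theorem C_comp_mem_tInvariants {s : ℂ} (hs : (-1) ^ w = s) {φ : SL2Z → ℂ}
    (hφ : IsCuspFunction Γ s φ) : (fun A => C (φ A)) ∈ tInvariants Γ w := by
  refine mem_tInvariants.mpr ⟨⟨fun A => degree_C_le.trans (by exact_mod_cast Nat.zero_le w),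
    fun γ hγ A => by simp only [hφ.mul_left γ hγ],
    fun A => by simp [negSL_eq_neg, hφ.neg, smul_eq_C_mul, hs]⟩, fun A => ?_⟩
  rw [famSlash, pSlash_C_Tm, ← hφ.mul_Tm (A * Tm⁻¹), inv_mul_cancel_right]

variable (Γ) in
def tInvariantsEquiv [Γ.FiniteIndex] {s : ℂ} (hs : (-1) ^ w = s) :
    tInvariants Γ w ≃ₗ[ℂ] cuspFunctions Γ s where
  toFun P := ⟨fun A => (P.1 A).eval 0, hs ▸ isCuspFunction_eval_zero P.2⟩
  map_add' P Q := by ext; simp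
  map_smul' c P := by ext; simp
  invFun φ := ⟨fun A => C (φ.1 A), C_comp_mem_tInvariants hs φ.2⟩
  left_inv P := Subtype.ext <| funext fun A => (apply_eq_C_eval_zero P.2 A).symm
  right_inv φ := Subtype.ext <| funext fun A => eval_C

instance [Γ.FiniteIndex] : FiniteDimensional ℂ (tInvariants Γ w) := by
  rcases Nat.even_or_odd w with hw | hw
  · exact .equiv ((tInvariantsEquiv Γ hw.neg_one_pow).trans (cuspFunctionsOneEquiv Γ)).symm
  · exact .equiv ((tInvariantsEquiv Γ hw.neg_one_pow).trans (cuspFunctionsNegOneEquiv Γ)).symm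

theorem finrank_tInvariants_of_even [Γ.FiniteIndex] (hw : Even w) :
    Module.finrank ℂ (tInvariants Γ w) = Nat.card (Cusps Γ) := by
  have := Fintype.ofFinite (Cusps Γ)
  rw [((tInvariantsEquiv Γ hw.neg_one_pow).trans (cuspFunctionsOneEquiv Γ)).finrank_eq,
    Module.finrank_fintype_fun_eq_card, Nat.card_eq_fintype_card]

theorem finrank_tInvariants_of_odd [Γ.FiniteIndex] (hw : Odd w) :
    Module.finrank ℂ (tInvariants Γ w) = Nat.card {c : Cusps Γ // IsRegularCusp Γ c} := by
  have := Fintype.ofFinite {c : Cusps Γ // IsRegularCusp Γ c}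
  rw [((tInvariantsEquiv Γ hw.neg_one_pow).trans (cuspFunctionsNegOneEquiv Γ)).finrank_eq,
    Module.finrank_fintype_fun_eq_card, Nat.card_eq_fintype_card]

end Polynomials

section Coboundary

variable {Γ : Subgroup SL2Z} {w : ℕ}

variable (w) in
def coboundary : (SL2Z → ℂ[X]) →ₗ[ℂ] (SL2Z → ℂ[X]) := LinearMap.id - famSlashLinear w Sm

theorem span_setOf_memC :
    Submodule.span ℂ {Q | MemC Γ w Q} = (tInvariants Γ w).map (coboundary w) := by
  have hC : {Q | MemC Γ w Q} = ((tInvariants Γ w).map (coboundary w) : Set _) := by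
    ext Q
    constructor
    · rintro ⟨P, hV, hT, hQ⟩
      exact ⟨P, mem_tInvariants.mpr ⟨hV, hT⟩, funext fun A => (hQ A).symm⟩
    · rintro ⟨P, hP, rfl⟩
      exact ⟨P, (mem_tInvariants.mp hP).1, (mem_tInvariants.mp hP).2, fun A => rfl⟩
  rw [hC, Submodule.span_eq]

variable [Γ.FiniteIndex]

theorem coboundary_apply_of_mem {P : SL2Z → ℂ[X]} (hP : P ∈ tInvariants Γ w) (A : SL2Z) :
    coboundary w P A = C ((P A).eval 0) - C ((P (A * Sm⁻¹)).eval 0) * X ^ w := by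
  show P A - pSlash w (P (A * Sm⁻¹)) Sm = _
  conv_lhs => rw [apply_eq_C_eval_zero hP A, apply_eq_C_eval_zero hP (A * Sm⁻¹), pSlash_C_Sm]

theorem ker_coboundary_domRestrict_eq_bot (hw : w ≠ 0) :
    LinearMap.ker ((coboundary w).domRestrict (tInvariants Γ w)) = ⊥ := by
  refine (Submodule.eq_bot_iff _).mpr fun ⟨P, hP⟩ hker => Subtype.ext (funext fun A => ?_)
  have hA := congrArg (fun Q => (Q A).coeff 0) (LinearMap.mem_ker.mp hker)
  simp [coboundary_apply_of_mem hP, coeff_X_pow, hw.symm] at hA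
  show P A = 0
  rw [apply_eq_C_eval_zero hP A, hA, C_0]

theorem apply_eq_apply_one_of_coboundary_eq_zero {P : SL2Z → ℂ[X]} (hP : P ∈ tInvariants Γ 0)
    (hker : coboundary 0 P = 0) (A : SL2Z) : P A = P 1 := by
  have hS (B : SL2Z) : (P (B * Sm)).eval 0 = (P B).eval 0 := by
    have h := congrFun hker (B * Sm)
    rw [coboundary_apply_of_mem hP, mul_inv_cancel_right, pow_zero, mul_one, Pi.zero_apply,
      sub_eq_zero] at h
    exact C_injective h
  have hT := (isCuspFunction_eval_zero hP).mul_Tm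
  have h := Subgroup.apply_mul_eq_of_mem_closure (f := fun B => (P B).eval 0)
    (s := {Sm, Tm}) (by rintro g (rfl | rfl); exacts [hS, hT])
    (closure_Sm_Tm ▸ Subgroup.mem_top A) 1
  rw [apply_eq_C_eval_zero hP A, apply_eq_C_eval_zero hP 1, ← h, one_mul]

theorem finrank_ker_coboundary_domRestrict_zero :
    Module.finrank ℂ (LinearMap.ker ((coboundary 0).domRestrict (tInvariants Γ 0))) = 1 := by
  have h1 : (1 : SL2Z → ℂ[X]) ∈ tInvariants Γ 0 := by
    rw [Pi.one_def]
    simpa using C_comp_mem_tInvariants (Γ := Γ) (φ := fun _ => 1) (pow_zero (-1))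
      ⟨fun _ _ _ => rfl, fun _ => rfl, fun _ => by simp⟩
  have hker1 : (⟨1, h1⟩ : tInvariants Γ 0) ∈ LinearMap.ker ((coboundary 0).domRestrict _) :=
    LinearMap.mem_ker.mpr <| funext fun A => by simp [coboundary_apply_of_mem h1]
  refine (finrank_eq_one_iff_of_nonzero' (⟨_, hker1⟩ : LinearMap.ker _) fun h => ?_).mpr
    fun u => ?_
  · simpa using congrArg (fun u => u.1.1 1) h
  · obtain ⟨⟨P, hP⟩, hker⟩ := u
    refine ⟨(P 1).eval 0, Subtype.ext (Subtype.ext (funext fun A => ?_))⟩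
    have hconst := apply_eq_apply_one_of_coboundary_eq_zero hP (LinearMap.mem_ker.mp hker) A
    show (P 1).eval 0 • (1 : ℂ[X]) = P A
    rw [hconst, apply_eq_C_eval_zero hP 1, eval_C, ← C_mul', mul_one]

end Coboundary

end CoboundaryPolynomials

open CoboundaryPolynomials in
theorem statement9 (Γ : Subgroup SL2Z) [Γ.FiniteIndex] (k : ℤ)
    (w : ℕ) (hw : (w : ℤ) = k - 2) :
    (2 < k → Even k →
      Module.finrank ℂ (Submodule.span ℂ {Q : SL2Z → Polynomial ℂ | MemC Γ w Q})
        = Nat.card (Cusps Γ)) ∧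
    (k = 2 →
      Module.finrank ℂ (Submodule.span ℂ {Q : SL2Z → Polynomial ℂ | MemC Γ w Q}) + 1
        = Nat.card (Cusps Γ)) ∧
    (2 < k → Odd k →
      Module.finrank ℂ (Submodule.span ℂ {Q : SL2Z → Polynomial ℂ | MemC Γ w Q})
        = Nat.card {c : Cusps Γ // IsRegularCusp Γ c}) := by
  have hrank := LinearMap.finrank_range_add_finrank_ker
    ((coboundary w).domRestrict (tInvariants Γ w))
  rw [LinearMap.range_domRestrict, ← span_setOf_memC] at hrank
  refine ⟨fun hk hke => ?_, fun hk => ?_, fun hk hko => ?_⟩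
  · have hwe : Even w := by
      rw [← Int.even_coe_nat, hw]
      exact hke.sub even_two
    rwa [ker_coboundary_domRestrict_eq_bot (by omega), finrank_bot, add_zero,
      finrank_tInvariants_of_even hwe] at hrank
  · obtain rfl : w = 0 := by omega
    rwa [finrank_ker_coboundary_domRestrict_zero, finrank_tInvariants_of_even Even.zero] at hrank
  · have hwo : Odd w := by
      rw [← Int.odd_coe_nat, hw]
      exact hko.sub_even even_two
    rwa [ker_coboundary_domRestrict_eq_bot (by omega), finrank_bot, add_zero,
      finrank_tInvariants_of_odd hwo] at hrank
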